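/- Consider a MinConCD instance with k = 2 clusters C_1, C_2, tag universe T, tag sets t_i with |t_i| ≤ γ for all i, budget B, and coverage requirements M_1, M_2. If there exist disjoint X_1, X_2 ⊆ T with |X_1| + |X_2| ≤ B, |V_1(X_1)| ≥ M_1 and |V_2(X_2)| ≥ M_2, then there exist disjoint X'_1, X'_2 ⊆ T with |X'_1| + |X'_2| ≤ B such that ∑_{j∈X'_1}|E_1(j)| ≥ M_1 and ∑_{j∈X'_2}|E_2(j)| ≥ M_2; moreover, any such pair (X'_1, X'_2) satisfies |V_1(X'_1)| ≥ M_1/γ and |V_2(X'_2)| ≥ M_2/γ, i.e., it is a (1/γ, 1)-approximate solution. -/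

import Mathlib

/-!
Double counting the incidences between the objects of a cluster and the chosen tags gives
`|V(X)| ≤ ∑_{j ∈ X} |E(j)| ≤ γ |V(X)|`: every covered object meets `X` at least once and at most
`γ` times. The left inequality turns any feasible solution into a solution of the relaxed,
additive problem, and the right one shows that a solution of the relaxed problem covers at least
a `1/γ` fraction of each requirement.
-/

open Finset

namespace Finset

variable {ι α : Type*}

theorem sum_card_filter_mem_eq_sum_card_inter [DecidableEq α]
    (C : Finset ι) (t : ι → Finset α) (X : Finset α) :
    ∑ j ∈ X, #{i ∈ C | j ∈ t i} = ∑ i ∈ C, #(t i ∩ X) :=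
  calc ∑ j ∈ X, #{i ∈ C | j ∈ t i}
      = ∑ i ∈ C, #(X.bipartiteAbove (fun i j => j ∈ t i) i) :=
        (sum_card_bipartiteAbove_eq_sum_card_bipartiteBelow _).symm
    _ = ∑ i ∈ C, #(t i ∩ X) := by
        simp only [bipartiteAbove, filter_mem_eq_inter, inter_comm]

theorem card_filter_nonempty_le_sum_card (C : Finset ι) (f : ι → Finset α) :
    #{i ∈ C | (f i).Nonempty} ≤ ∑ i ∈ C, #(f i) :=
  calc #{i ∈ C | (f i).Nonempty}
      ≤ ∑ i ∈ C with (f i).Nonempty, #(f i) :=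
        by simpa using card_nsmul_le_sum _ (fun i => #(f i)) 1 fun i hi =>
          card_pos.mpr (mem_filter.mp hi).2
    _ ≤ ∑ i ∈ C, #(f i) := sum_le_sum_of_subset (filter_subset _ _)

theorem sum_card_le_mul_card_filter_nonempty (C : Finset ι) (f : ι → Finset α) {γ : ℕ}
    (hγ : ∀ i ∈ C, #(f i) ≤ γ) :
    ∑ i ∈ C, #(f i) ≤ γ * #{i ∈ C | (f i).Nonempty} :=
  calc ∑ i ∈ C, #(f i)
      = ∑ i ∈ C with (f i).Nonempty, #(f i) :=
        (sum_filter_of_ne fun _ _ h => card_pos.mp (Nat.pos_of_ne_zero h)).symm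
    _ ≤ #{i ∈ C | (f i).Nonempty} * γ :=
        sum_le_card_nsmul _ _ _ fun i hi => hγ i (mem_filter.mp hi).1
    _ = γ * #{i ∈ C | (f i).Nonempty} := Nat.mul_comm _ _

end Finset

section Coverage

variable {S T : Type*} [DecidableEq T] (C : Finset S) (t : S → Finset T) (X : Finset T)

theorem card_covered_le_sum_card_tagged :
    #{i ∈ C | (t i ∩ X).Nonempty} ≤ ∑ j ∈ X, #{i ∈ C | j ∈ t i} := by
  rw [sum_card_filter_mem_eq_sum_card_inter]
  exact card_filter_nonempty_le_sum_card C _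

theorem div_le_card_covered_of_le_sum_card_tagged {γ : ℕ} (hγ : ∀ i, #(t i) ≤ γ) {M : ℝ}
    (hM : M ≤ ((∑ j ∈ X, #{i ∈ C | j ∈ t i} : ℕ) : ℝ)) :
    M / γ ≤ #{i ∈ C | (t i ∩ X).Nonempty} := by
  rcases Nat.eq_zero_or_pos γ with rfl | hγ_pos
  · simp
  have hsum : ∑ j ∈ X, #{i ∈ C | j ∈ t i} ≤ γ * #{i ∈ C | (t i ∩ X).Nonempty} := by
    rw [sum_card_filter_mem_eq_sum_card_inter]
    exact sum_card_le_mul_card_filter_nonempty C _ fun i _ =>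
      (card_le_card inter_subset_left).trans (hγ i)
  rw [div_le_iff₀ (Nat.cast_pos.mpr hγ_pos), mul_comm]
  exact hM.trans (by exact_mod_cast hsum)

end Coverage

theorem stmt15 {S T : Type*} [DecidableEq T]
    (C1 C2 : Finset S)
    (t : S → Finset T) (γ B : ℕ)
    (hγ : ∀ i : S, (t i).card ≤ γ)
    (M1 M2 : ℝ)
    (hfeas : ∃ X1 X2 : Finset T, Disjoint X1 X2 ∧ X1.card + X2.card ≤ B ∧
      M1 ≤ ((C1.filter fun i => (t i ∩ X1).Nonempty).card : ℝ) ∧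
      M2 ≤ ((C2.filter fun i => (t i ∩ X2).Nonempty).card : ℝ)) :
    (∃ X1' X2' : Finset T, Disjoint X1' X2' ∧ X1'.card + X2'.card ≤ B ∧
      M1 ≤ ((∑ j ∈ X1', (C1.filter fun i => j ∈ t i).card : ℕ) : ℝ) ∧
      M2 ≤ ((∑ j ∈ X2', (C2.filter fun i => j ∈ t i).card : ℕ) : ℝ))
    ∧ (∀ X1' X2' : Finset T, Disjoint X1' X2' → X1'.card + X2'.card ≤ B →
        M1 ≤ ((∑ j ∈ X1', (C1.filter fun i => j ∈ t i).card : ℕ) : ℝ) →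
        M2 ≤ ((∑ j ∈ X2', (C2.filter fun i => j ∈ t i).card : ℕ) : ℝ) →
        M1 / (γ : ℝ) ≤ ((C1.filter fun i => (t i ∩ X1').Nonempty).card : ℝ) ∧
        M2 / (γ : ℝ) ≤ ((C2.filter fun i => (t i ∩ X2').Nonempty).card : ℝ)) := by
  obtain ⟨X1, X2, hdisj, hbudget, h1, h2⟩ := hfeas
  refine ⟨⟨X1, X2, hdisj, hbudget, ?_, ?_⟩, fun X1' X2' _ _ h1' h2' => ⟨?_, ?_⟩⟩
  · exact h1.trans (by exact_mod_cast card_covered_le_sum_card_tagged C1 t X1)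
  · exact h2.trans (by exact_mod_cast card_covered_le_sum_card_tagged C2 t X2)
  · exact div_le_card_covered_of_le_sum_card_tagged C1 t X1' hγ h1'
  · exact div_le_card_covered_of_le_sum_card_tagged C2 t X2' hγ h2'
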